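/- For all integers n, m ≥ 3, the integral ∫_{-1}^{1} P_n(x) P_m(x) / √(1-x^2) dx equals π/4 if m = n, equals -π/8 if |n-m| = 2, and equals 0 otherwise. -/

import Mathlib

/-!
Pascal's rule turns the alternating binomial sum `f a b m 2` into the recurrence
`f (a + 1) b = 2 f a b + f a (b - 1)` (its generating function in `b` is `(1 + y)^m (2 + y)^a`).
Read through `c (a + b + 2) (a - b + 2) = (-1)^b f a b`, this is the Chebyshev recurrence
`P_{n+2} = 2x P_{n+1} - P_n` for `n ≥ 3`, so checking `n = 3, 4` gives `2 P_n = T_n - T_{n-2}`.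
The integral then reduces to four instances of the orthogonality relation
`∫ T_a T_b / √(1 - x²) = π/2 · [a = b]` for `a + b > 0`.
-/

open Finset Polynomial Real

noncomputable section

/-- Binomial coefficient `C(a, b)` for integer lower index, zero when `b < 0` or `b > a`. -/
def chooseZ (a : ℕ) (b : ℤ) : ℤ := if 0 ≤ b then (a.choose b.toNat : ℤ) else 0

/-- `f n k m p = ∑_{i=0}^{n} (-1)^i C(n,i) C(np+m-ip, n+k)`. -/
def f (n : ℕ) (k : ℤ) (m p : ℕ) : ℤ :=
  ∑ i ∈ Finset.range (n + 1),
    (-1) ^ i * (n.choose i : ℤ) * chooseZ (n * p + m - i * p) ((n : ℤ) + k)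

/-- The coefficients `c(n,k,m,p)`. -/
def c (n : ℕ) (k : ℤ) (m p : ℕ) : ℤ :=
  if 0 ≤ k ∧ k ≤ (n : ℤ) ∧ (n : ℤ) % 2 = k % 2 ∧ 2 * (m : ℤ) ≤ (n : ℤ) + k then
    (-1) ^ ((((n : ℤ) - k) / 2).toNat) *
      f ((((n : ℤ) + k - 2 * m) / 2).toNat) (((n : ℤ) - k) / 2) m p
  else 0

/-- The polynomial `P_{n,m,p}(x) = ∑_{k=0}^n c(n,k,m,p) x^k`, as a real polynomial. -/
def P (n m p : ℕ) : Polynomial ℝ :=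
  ∑ k ∈ Finset.range (n + 1), Polynomial.C ((c n (k : ℤ) m p : ℝ)) * Polynomial.X ^ k

theorem chooseZ_of_neg {r : ℤ} (hr : r < 0) (N : ℕ) : chooseZ N r = 0 := by
  simp [chooseZ, hr.not_ge]

theorem chooseZ_of_lt {N : ℕ} {r : ℤ} (hr : N < r) : chooseZ N r = 0 := by
  rw [chooseZ, if_pos (by omega), Nat.choose_eq_zero_of_lt (by omega), Nat.cast_zero]

theorem chooseZ_succ (N : ℕ) (r : ℤ) :
    chooseZ (N + 1) r = chooseZ N r + chooseZ N (r - 1) := by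
  rcases lt_or_ge r 0 with hr | hr
  · rw [chooseZ_of_neg hr, chooseZ_of_neg hr, chooseZ_of_neg (by omega), add_zero]
  obtain ⟨s, rfl⟩ := Int.eq_ofNat_of_zero_le hr
  cases s with
  | zero => simp [chooseZ]
  | succ s =>
    rw [show ((s + 1 : ℕ) : ℤ) - 1 = s by omega]
    simp only [chooseZ, Nat.cast_nonneg, if_true, Int.toNat_natCast]
    rw [Nat.choose_succ_succ', Nat.cast_add, add_comm]

theorem chooseZ_add_two (N : ℕ) (r : ℤ) :
    chooseZ (N + 2) r = chooseZ N r + 2 * chooseZ N (r - 1) + chooseZ N (r - 2) := by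
  rw [chooseZ_succ, chooseZ_succ, chooseZ_succ N (r - 1), sub_sub, one_add_one_eq_two]
  ring

theorem f_eq_sum_choose_mul (a : ℕ) (b : ℤ) (m p : ℕ) :
    f a b m p =
      ∑ i ∈ range (a + 1), (a.choose i : ℤ) * ((-1) ^ i * chooseZ ((a - i) * p + m) (a + b)) := by
  refine sum_congr rfl fun i hi => ?_
  have hia : i * p ≤ a * p := Nat.mul_le_mul_right _ (Nat.lt_succ_iff.mp (mem_range.mp hi))
  rw [show a * p + m - i * p = (a - i) * p + m by rw [Nat.sub_mul, Nat.sub_add_comm hia]]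
  ring

theorem f_zero (b : ℤ) (m p : ℕ) : f 0 b m p = chooseZ m b := by
  simp [f]

theorem f_succ (a : ℕ) (b : ℤ) (m : ℕ) :
    f (a + 1) b m 2 = 2 * f a b m 2 + f a (b - 1) m 2 := by
  rw [f_eq_sum_choose_mul, f_eq_sum_choose_mul, f_eq_sum_choose_mul, mul_sum, ← sum_add_distrib,
    sum_choose_succ_mul (fun i j => (-1) ^ i * chooseZ (j * 2 + m) ((a + 1 : ℕ) + b)),
    ← sum_add_distrib]
  refine sum_congr rfl fun i hi => ?_
  rw [show (a + 1 - i) * 2 + m = (a - i) * 2 + m + 2 by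
    have := mem_range.mp hi; omega, chooseZ_add_two]
  push_cast
  rw [show (a : ℤ) + 1 + b - 1 = a + b by ring, show (a : ℤ) + 1 + b - 2 = a + (b - 1) by ring]
  ring

theorem f_eq_zero_of_neg (a : ℕ) {b : ℤ} (hb : b < 0) (m : ℕ) : f a b m 2 = 0 := by
  induction a generalizing b with
  | zero => rw [f_zero, chooseZ_of_neg hb]
  | succ a ih => rw [f_succ, ih hb, ih (by omega), mul_zero, add_zero]

theorem f_eq_zero_of_lt {a : ℕ} {b : ℤ} {m : ℕ} (hb : a + m < b) : f a b m 2 = 0 := by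
  induction a generalizing b with
  | zero => rw [f_zero, chooseZ_of_lt (by omega)]
  | succ a ih => rw [f_succ, ih (by omega), ih (by omega), mul_zero, add_zero]

theorem c_eq_zero {n : ℕ} {k : ℤ} {m : ℕ} (p : ℕ)
    (h : ¬(0 ≤ k ∧ k ≤ (n : ℤ) ∧ (n : ℤ) % 2 = k % 2 ∧ 2 * (m : ℤ) ≤ (n : ℤ) + k)) :
    c n k m p = 0 :=
  if_neg h

theorem c_eq_neg_one_pow_mul {n a b m : ℕ} {k : ℤ} (hn : n = a + b + m)
    (hk : k = (a : ℤ) - b + m) :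
    c n k m 2 = (-1) ^ b * f a b m 2 := by
  subst hn hk
  by_cases hb : b ≤ a + m
  · rw [c, if_pos (by omega), show ((a + b + m : ℕ) - ((a : ℤ) - b + m)) / 2 = b by omega,
      show ((a + b + m : ℕ) + ((a : ℤ) - b + m) - 2 * m) / 2 = a by omega]
    rfl
  · rw [c_eq_zero 2 (by omega), f_eq_zero_of_lt (by omega), mul_zero]

-- For `n ≤ 2` the cut-off `2 * 2 ≤ n + k` in `c` breaks this (e.g. `c 4 0 2 2 = 1`).
theorem c_add_two {n : ℕ} (hn : 3 ≤ n) (k : ℤ) :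
    c (n + 2) k 2 2 = 2 * c (n + 1) (k - 1) 2 2 - c n k 2 2 := by
  by_cases htop : k = n + 2
  · obtain ⟨a, rfl⟩ : ∃ a, n = a + 1 := ⟨n - 1, by omega⟩
    rw [c_eq_neg_one_pow_mul (a := a + 1) (b := 0) ?_ ?_,
      c_eq_neg_one_pow_mul (a := a) (b := 0) ?_ ?_, c_eq_zero 2 (by omega), f_succ,
      f_eq_zero_of_neg a (by omega : ((0 : ℕ) : ℤ) - 1 < 0)]
    · ring
    all_goals omega
  by_cases hk : 0 ≤ k ∧ k ≤ n ∧ (n : ℤ) % 2 = k % 2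
  · obtain ⟨a, b, rfl, rfl⟩ : ∃ a b : ℕ, n = a + b + 2 ∧ k = (a : ℤ) - b + 2 :=
      ⟨((n + k - 4) / 2).toNat, ((n - k) / 2).toNat, by omega, by omega⟩
    rw [c_eq_neg_one_pow_mul (a := a + 1) (b := b + 1) ?_ ?_,
      c_eq_neg_one_pow_mul (a := a) (b := b + 1) ?_ ?_,
      c_eq_neg_one_pow_mul (a := a) (b := b) ?_ ?_, f_succ, Nat.cast_succ, add_sub_cancel_right]
    · ring
    all_goals omega
  · rw [c_eq_zero 2 (by omega), c_eq_zero 2 (by omega), c_eq_zero 2 (by omega)]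
    ring

theorem coeff_P (n m p k : ℕ) : (P n m p).coeff k = c n k m p := by
  rw [P, finsetSum_coeff]
  simp only [coeff_C_mul_X_pow]
  rw [sum_ite_eq, ite_eq_left_iff]
  intro hk
  rw [c_eq_zero p (by simp only [mem_range] at hk; omega), Int.cast_zero]

theorem P_add_two {n : ℕ} (hn : 3 ≤ n) : P (n + 2) 2 2 = 2 * X * P (n + 1) 2 2 - P n 2 2 := by
  ext k
  rw [coeff_sub, mul_assoc, coeff_ofNat_mul, coeff_P, coeff_P, c_add_two hn]
  cases k with
  | zero => simp [c_eq_zero 2 (n := n + 1) (k := -1) (by omega)]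
  | succ k => rw [coeff_X_mul, coeff_P, Nat.cast_succ, add_sub_cancel_right]; push_cast; rfl

namespace Polynomial.Chebyshev

theorem T_add_two_sub_T (R : Type*) [CommRing R] (n : ℤ) :
    T R (n + 2) - T R n = 2 * X * (T R (n + 1) - T R (n - 1)) - (T R n - T R (n - 2)) := by
  linear_combination T_add_two R n - T_eq R n

theorem T_three (R : Type*) [CommRing R] : T R 3 = 4 * X ^ 3 - 3 * X := by
  rw [show (3 : ℤ) = 1 + 2 by rfl, T_add_two, one_add_one_eq_two, T_two, T_one]
  ring

theorem T_four (R : Type*) [CommRing R] : T R 4 = 8 * X ^ 4 - 8 * X ^ 2 + 1 := by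
  rw [show (4 : ℤ) = 2 + 2 by rfl, T_add_two, show (2 : ℤ) + 1 = 3 by rfl, T_three, T_two]
  ring

end Polynomial.Chebyshev

open Polynomial.Chebyshev MeasureTheory

theorem P_three : P 3 2 2 = 2 * X ^ 3 - 2 * X := by
  simp [P, sum_range_succ, show c 3 0 2 2 = 0 by decide, show c 3 1 2 2 = -2 by decide,
    show c 3 2 2 2 = 0 by decide, show c 3 3 2 2 = 2 by decide]
  ring

theorem P_four : P 4 2 2 = 4 * X ^ 4 - 5 * X ^ 2 + 1 := by
  simp [P, sum_range_succ, show c 4 0 2 2 = 1 by decide, show c 4 1 2 2 = 0 by decide,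
    show c 4 2 2 2 = -5 by decide, show c 4 3 2 2 = 0 by decide, show c 4 4 2 2 = 4 by decide]
  ring

theorem two_mul_P_eq_T_sub_T {n : ℕ} (hn : 3 ≤ n) : 2 * P n 2 2 = T ℝ n - T ℝ (n - 2) := by
  induction n using Nat.strong_induction_on with
  | _ n ih =>
    rcases (by omega : n = 3 ∨ n = 4 ∨ 5 ≤ n) with rfl | rfl | h5
    · norm_num [P_three, T_three, T_one]
      ring
    · norm_num [P_four, T_four, T_two]
      ring
    · obtain ⟨k, rfl⟩ : ∃ k, n = k + 3 + 2 := ⟨n - 5, by omega⟩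
      have h4 := ih (k + 4) (by omega) (by omega)
      have h3 := ih (k + 3) (by omega) (by omega)
      have hT := T_add_two_sub_T ℝ ((k + 3 : ℕ) : ℤ)
      rw [show ((k + 3 : ℕ) : ℤ) + 2 = (k + 3 + 2 : ℕ) by omega,
        show ((k + 3 : ℕ) : ℤ) + 1 = (k + 4 : ℕ) by omega,
        show ((k + 3 : ℕ) : ℤ) - 1 = (k + 4 : ℕ) - 2 by omega] at hT
      rw [P_add_two (by omega), mul_sub, ← mul_assoc, mul_comm (2 : ℝ[X]), mul_assoc, h4, h3,
        show ((k + 3 + 2 : ℕ) : ℤ) - 2 = (k + 3 : ℕ) by omega, hT]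

theorem integral_eval_T_mul_eval_T_measureT {a b : ℤ} (hab : 0 < a + b) :
    ∫ x, (T ℝ a).eval x * (T ℝ b).eval x ∂measureT = if a = b then π / 2 else 0 := by
  rw [integral_eval_T_real_mul_eval_T_real_measureT,
    integral_eval_T_real_measureT_of_ne_zero hab.ne']
  split_ifs with h
  · rw [h, sub_self, integral_eval_T_real_measureT_zero]
    ring
  · rw [integral_eval_T_real_measureT_of_ne_zero (sub_ne_zero.mpr h)]
    ring

theorem intervalIntegral_div_sqrt_eq_integral_measureT (g : ℝ → ℝ) :
    ∫ x in (-1 : ℝ)..1, g x / √(1 - x ^ 2) = ∫ x, g x ∂measureT := by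
  simp_rw [integral_measureT, Real.sqrt_inv, div_eq_mul_inv]

/-- For n, m ≥ 3,
`∫_{-1}^{1} P_n(x) P_m(x) / √(1-x²) dx` equals π/4 if m = n, -π/8 if |n-m| = 2, 0 otherwise. -/
theorem statement6 (n m : ℕ) (hn : 3 ≤ n) (hm : 3 ≤ m) :
    ∫ x in (-1 : ℝ)..1, (P n 2 2).eval x * (P m 2 2).eval x / Real.sqrt (1 - x ^ 2) =
      if n = m then Real.pi / 4
      else if ((n : ℤ) - m).natAbs = 2 then - (Real.pi / 8)
      else 0 := by
  have hint (a b : ℤ) : Integrable (fun x ↦ (T ℝ a).eval x * (T ℝ b).eval x) measureT :=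
    integrable_measureT (by fun_prop)
  have hPP (x : ℝ) : (P n 2 2).eval x * (P m 2 2).eval x =
      (T ℝ n - T ℝ (n - 2)).eval x * (T ℝ m - T ℝ (m - 2)).eval x / 4 := by
    rw [← two_mul_P_eq_T_sub_T hn, ← two_mul_P_eq_T_sub_T hm]
    simp only [eval_mul, eval_ofNat]
    ring
  rw [intervalIntegral_div_sqrt_eq_integral_measureT]
  simp_rw [hPP, integral_div, eval_sub, sub_mul, mul_sub]
  rw [integral_sub ((hint _ _).sub' (hint _ _)) ((hint _ _).sub' (hint _ _)),
    integral_sub (hint _ _) (hint _ _), integral_sub (hint _ _) (hint _ _)]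
  rw [integral_eval_T_mul_eval_T_measureT (by omega),
    integral_eval_T_mul_eval_T_measureT (by omega),
    integral_eval_T_mul_eval_T_measureT (by omega),
    integral_eval_T_mul_eval_T_measureT (by omega)]
  split_ifs <;> first | (exfalso; omega) | ring
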